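/- arXiv:1504.06979 — 5 statements merged into one kernel-verified Lean document; each statement's English description precedes it below -/
import Mathlib

section
/- Let G be a k-vertex-critical graph and let U, W be non-empty disjoint vertex subsets. Let H := (G - U)_{k-1} be the (k-1)-hull of G - U. If φ : G[U] → H[W] is a graph homomorphism, then there exists u ∈ U such that N_G(u) \ U is not contained in N_H(φ(u)). -/
/-- `G` is `k`-vertex-critical. -/
def IsVertexCritical {V : Type*} (G : SimpleGraph V) (k : ℕ) : Prop :=
  G.chromaticNumber = k ∧ ∀ v : V, (G.induce ({v}ᶜ : Set V)).Colorable (k - 1)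

/-- The `m`-hull of `G - U`, as a graph on `V`: vertices `u`, `v` outside `U` are
adjacent iff every proper `m`-coloring of `G - U` gives them different colors. -/
def hullDel {V : Type*} (G : SimpleGraph V) (U : Set V) (m : ℕ) : SimpleGraph V where
  Adj u v := u ≠ v ∧ u ∉ U ∧ v ∉ U ∧
    ∀ c : V → Fin m, (∀ a b, a ∉ U → b ∉ U → G.Adj a b → c a ≠ c b) → c u ≠ c v
  symm := ⟨fun u v h => ⟨h.1.symm, h.2.2.1, h.2.1, fun c hc => (h.2.2.2 c hc).symm⟩⟩
  loopless := ⟨fun u h => h.1 rfl⟩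

/-!
Suppose every `u ∈ U` has `N_G(u) \ U ⊆ N_H(φ u)`. Take `v ∈ U` and a `(k-1)`-coloring `C` of
`G - v`, and recolor every `u ∈ U` by the color of `φ u`, a vertex outside `U`. Restricted to
`G - U` this is still a proper coloring, so by the definition of the hull it separates the ends
of every edge of `H`. The hypotheses turn each edge of `G` meeting `U` into such an edge of `H`,
so the recoloring is a proper `(k-1)`-coloring of all of `G`, contradicting `χ(G) = k`.
-/

namespace SimpleGraph

variable {V : Type*} {G : SimpleGraph V} {U : Set V} {m : ℕ}

def IsProperColoringOff (G : SimpleGraph V) (U : Set V) {α : Type*} (c : V → α) : Prop :=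
  ∀ a b, a ∉ U → b ∉ U → G.Adj a b → c a ≠ c b

theorem hullDel_adj_ne {c : V → Fin m} (hc : G.IsProperColoringOff U c) {x y : V}
    (hxy : (hullDel G U m).Adj x y) : c x ≠ c y :=
  hxy.2.2.2 c hc

theorem exists_isProperColoringOff_of_colorable_induce_compl {v : V} (hv : v ∈ U)
    (hC : (G.induce ({v}ᶜ : Set V)).Colorable m) {φ : V → V} (hφU : ∀ u ∈ U, φ u ∉ U) :
    ∃ c : V → Fin m, G.IsProperColoringOff U c ∧ ∀ u ∈ U, c u = c (φ u) := by
  classical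
  obtain ⟨C⟩ := hC
  have hne : ∀ x, (if x ∈ U then φ x else x) ∈ ({v}ᶜ : Set V) := by
    intro x
    split_ifs with hx
    · exact fun h => hφU x hx (h ▸ hv)
    · exact fun h => hx (h ▸ hv)
  refine ⟨fun x => C ⟨_, hne x⟩, fun a b ha hb hab => ?_, fun u hu => ?_⟩
  · simp only [ha, hb, if_false]
    exact C.valid hab
  · simp only [hu, hφU u hu, if_true, if_false]

theorem colorable_of_forall_neighborSet_diff_subset_hullDel {c : V → Fin m}
    (hc : G.IsProperColoringOff U c) {φ : V → V} (hcφ : ∀ u ∈ U, c u = c (φ u))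
    (hφ : ∀ u ∈ U, ∀ u' ∈ U, G.Adj u u' → (hullDel G U m).Adj (φ u) (φ u'))
    (hN : ∀ u ∈ U, G.neighborSet u \ U ⊆ (hullDel G U m).neighborSet (φ u)) :
    G.Colorable m := by
  have hUadj : ∀ a b, a ∈ U → G.Adj a b → c a ≠ c b := by
    intro a b ha hab
    rw [hcφ a ha]
    by_cases hb : b ∈ U
    · rw [hcφ b hb]
      exact hullDel_adj_ne hc (hφ a ha b hb hab)
    · exact hullDel_adj_ne hc (hN a ha ⟨hab, hb⟩)
  refine ⟨Coloring.mk c fun {a b} hab => ?_⟩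
  by_cases ha : a ∈ U
  · exact hUadj a b ha hab
  by_cases hb : b ∈ U
  · exact (hUadj b a hb hab.symm).symm
  exact hc a b ha hb hab

theorem not_colorable_sub_one_of_chromaticNumber_eq [Nonempty V] {k : ℕ}
    (hk : G.chromaticNumber = k) : ¬ G.Colorable (k - 1) := by
  intro hcol
  have hle := hcol.chromaticNumber_le
  have hpos := hcol.chromaticNumber_pos
  rw [hk] at hle hpos
  norm_cast at hle hpos
  omega

end SimpleGraph

open SimpleGraph in
theorem color_trick_general {V : Type*} (G : SimpleGraph V) (k : ℕ)
    (hG : IsVertexCritical G k) (U W : Set V)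
    (hU : U.Nonempty) (hUW : Disjoint U W)
    (φ : V → V) (hφW : ∀ u ∈ U, φ u ∈ W)
    (hφhom : ∀ u ∈ U, ∀ u' ∈ U, G.Adj u u' → (hullDel G U (k - 1)).Adj (φ u) (φ u')) :
    ∃ u ∈ U, ¬ (G.neighborSet u \ U ⊆ (hullDel G U (k - 1)).neighborSet (φ u)) := by
  by_contra hN
  push Not at hN
  obtain ⟨v, hv⟩ := hU
  have : Nonempty V := ⟨v⟩
  have hφU : ∀ u ∈ U, φ u ∉ U := fun u hu => Set.disjoint_right.mp hUW (hφW u hu)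
  obtain ⟨c, hc, hcφ⟩ := exists_isProperColoringOff_of_colorable_induce_compl hv (hG.2 v) hφU
  exact not_colorable_sub_one_of_chromaticNumber_eq hG.1
    (colorable_of_forall_neighborSet_diff_subset_hullDel hc hcφ hφhom hN)

/-- Color trick: if `G` is `k`-vertex-critical, `U`, `W` nonempty disjoint vertex sets,
`H := (G - U)_{k-1}`, and `φ` is a homomorphism from `G[U]` to `H[W]`, then some
`u ∈ U` has `N_G(u) \ U ⊄ N_H(φ u)`. -/
theorem color_trick {V : Type*} [Fintype V] (G : SimpleGraph V) (k : ℕ)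
    (hG : IsVertexCritical G k) (U W : Set V)
    (hU : U.Nonempty) (hW : W.Nonempty) (hUW : Disjoint U W)
    (φ : V → V) (hφW : ∀ u ∈ U, φ u ∈ W)
    (hφhom : ∀ u ∈ U, ∀ u' ∈ U, G.Adj u u' → (hullDel G U (k - 1)).Adj (φ u) (φ u')) :
    ∃ u ∈ U, ¬ (G.neighborSet u \ U ⊆ (hullDel G U (k - 1)).neighborSet (φ u)) :=
  color_trick_general G k hG U W hU hUW φ hφW hφhom
end

section
/- Let G be a graph with a tripod T = (A_1, A_2, A_3). If G is 3-colorable, then in every 3-coloring of G, each set A_i is monochromatic, and A_1, A_2, A_3 receive three pairwise distinct colors. -/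
/-- `(A 0, A 1, A 2)` is a tripod in `G` with ordering `v : Fin k → V`:
disjoint stable sets covering `{v 0, ..., v (k-1)}`, with `v i ∈ A i` for
`i = 0,1,2`, the root `v 0, v 1, v 2` a triangle, and every vertex `v j` with
`j ≥ 3` having earlier neighbors in both classes other than its own. -/
def IsTripod {V : Type*} (G : SimpleGraph V) (A : Fin 3 → Set V)
    (k : ℕ) (v : Fin k → V) : Prop :=
  3 ≤ k ∧
  Function.Injective v ∧
  (∀ i j : Fin 3, i ≠ j → Disjoint (A i) (A j)) ∧
  (∀ i : Fin 3, ∀ a ∈ A i, ∀ b ∈ A i, ¬ G.Adj a b) ∧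
  ((⋃ i, A i) = Set.range v) ∧
  (∀ i : Fin 3, ∀ hi : (i : ℕ) < k, v ⟨i, hi⟩ ∈ A i) ∧
  (∀ (h0 : 0 < k) (h1 : 1 < k) (h2 : 2 < k),
    G.Adj (v ⟨0, h0⟩) (v ⟨1, h1⟩) ∧ G.Adj (v ⟨0, h0⟩) (v ⟨2, h2⟩) ∧
      G.Adj (v ⟨1, h1⟩) (v ⟨2, h2⟩)) ∧
  (∀ j : Fin k, 3 ≤ (j : ℕ) → ∀ i : Fin 3, v j ∈ A i →
    ∀ i' : Fin 3, i' ≠ i →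
      ∃ j' : Fin k, (j' : ℕ) < (j : ℕ) ∧ v j' ∈ A i' ∧ G.Adj (v j) (v j'))

/-- The sets `(A 0, A 1, A 2)` form a tripod in `G` for some ordering. -/
def IsTripodSets {V : Type*} (G : SimpleGraph V) (A : Fin 3 → Set V) : Prop :=
  ∃ (k : ℕ) (v : Fin k → V), IsTripod G A k v

/-- A maximal tripod: no vertex can be added to any class so that the result
is still a tripod. -/
def MaximalTripod {V : Type*} (G : SimpleGraph V) (A : Fin 3 → Set V) : Prop :=
  IsTripodSets G A ∧
  ∀ x : V, x ∉ (⋃ i, A i) → ∀ i : Fin 3,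
    ¬ IsTripodSets G (Function.update A i (insert x (A i)))

/-- In every 3-coloring of a graph with a tripod `(A 0, A 1, A 2)`, each class
`A i` is monochromatic, and the three classes receive pairwise distinct colors. -/
theorem tripod_classes_monochromatic {V : Type*} (G : SimpleGraph V)
    (A : Fin 3 → Set V) (k : ℕ) (v : Fin k → V) (hT : IsTripod G A k v)
    (c : G.Coloring (Fin 3)) :
    (∀ i : Fin 3, ∀ a ∈ A i, ∀ b ∈ A i, c a = c b) ∧
    (∀ i j : Fin 3, i ≠ j → ∀ a ∈ A i, ∀ b ∈ A j, c a ≠ c b) := by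
  obtain ⟨h3, hinj, hdisj, hstable, hcover, hmem, htri, hnbr⟩ := hT
  have h0 : 0 < k := by omega
  have h1 : 1 < k := by omega
  have h2 : 2 < k := by omega
  set d : Fin 3 → Fin 3 := fun i => c (v ⟨(i : ℕ), lt_of_lt_of_le i.isLt h3⟩) with hd
  have hdp : ∀ a b : Fin 3, a ≠ b → d a ≠ d b := by
    obtain ⟨t01, t02, t12⟩ := htri h0 h1 h2
    have e01 := c.valid t01
    have e02 := c.valid t02
    have e12 := c.valid t12
    intro a b hab
    fin_cases a <;> fin_cases b <;>
      first
        | exact absurd rfl hab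
        | exact e01 | exact e02 | exact e12
        | exact fun h => e01 h.symm
        | exact fun h => e02 h.symm
        | exact fun h => e12 h.symm
  have hdinj : Function.Injective d := fun a b h => by
    by_contra hne; exact hdp a b hne h
  have hdsurj : Function.Surjective d := Finite.injective_iff_surjective.mp hdinj
  have key : ∀ n, ∀ j : Fin k, (j : ℕ) = n → ∀ i : Fin 3, v j ∈ A i → c (v j) = d i := by
    intro n
    induction n using Nat.strong_induction_on with
    | _ n ih =>
      intro j hjn i hvi
      by_cases hlt : (j : ℕ) < 3
      · have hm := hmem ⟨(j : ℕ), hlt⟩ j.isLt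
        have hjeq : (⟨((⟨(j : ℕ), hlt⟩ : Fin 3) : ℕ), j.isLt⟩ : Fin k) = j := Fin.ext rfl
        rw [hjeq] at hm
        have hieq : i = ⟨(j : ℕ), hlt⟩ := by
          by_contra hne
          exact (hdisj i _ hne).ne_of_mem hvi hm rfl
        subst hieq
        simp only [hd]
      · have hge : 3 ≤ (j : ℕ) := by omega
        have hne' : ∀ i' : Fin 3, i' ≠ i → c (v j) ≠ d i' := by
          intro i' hi'
          obtain ⟨j', hjlt, hj'A, hadj⟩ := hnbr j hge i hvi i' hi'
          have hcj' := ih (j' : ℕ) (by omega) j' rfl i' hj'A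
          have hne := c.valid hadj
          rw [hcj'] at hne
          exact hne
        obtain ⟨m, hm⟩ := hdsurj (c (v j))
        have hmi : m = i := by
          by_contra hmi
          exact hne' m hmi hm.symm
        rw [← hm, hmi]
  have hcol : ∀ i : Fin 3, ∀ a ∈ A i, c a = d i := by
    intro i a ha
    have hmem' : a ∈ ⋃ i, A i := Set.mem_iUnion.mpr ⟨i, ha⟩
    rw [hcover] at hmem'
    obtain ⟨j, rfl⟩ := hmem'
    exact key (j : ℕ) j rfl i ha
  constructor
  · intro i a ha b hb
    rw [hcol i a ha, hcol i b hb]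
  · intro i j hij a ha b hb
    rw [hcol i a ha, hcol j b hb]
    exact hdp i j hij
end

section
/- Let G be a graph with a tripod T = (A_1, A_2, A_3), and let G' be obtained from G by contracting the tripod (identifying each A_i to a single vertex a_i, with a_i adjacent to the union of neighbors of vertices of A_i, and a_1a_2a_3 a triangle). Then G is 3-colorable if and only if G' is 3-colorable. -/
/-- The graph obtained from `G` by contracting the tripod `(A 0, A 1, A 2)`:
each class `A i` is identified to a single vertex (the `Sum.inr i` vertices),
adjacent to the union of the neighborhoods of the vertices of `A i`, with the
three contracted vertices forming a triangle. -/
def contractTripod {V : Type*} (G : SimpleGraph V) (A : Fin 3 → Set V) :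
    SimpleGraph ({x : V // x ∉ ⋃ i, A i} ⊕ Fin 3) where
  Adj x y :=
    match x, y with
    | Sum.inl a, Sum.inl b => G.Adj a.1 b.1
    | Sum.inl a, Sum.inr i => ∃ w ∈ A i, G.Adj a.1 w
    | Sum.inr i, Sum.inl b => ∃ w ∈ A i, G.Adj w b.1
    | Sum.inr i, Sum.inr j => i ≠ j
  symm := by
    constructor
    rintro (a | i) (b | j) h
    · exact h.symm
    · obtain ⟨w, hw, hadj⟩ := h
      exact ⟨w, hw, hadj.symm⟩
    · obtain ⟨w, hw, hadj⟩ := h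
      exact ⟨w, hw, hadj.symm⟩
    · exact h.symm
  loopless := by
    constructor
    rintro (a | i) h
    · exact G.irrefl h
    · exact h rfl

/-!
In a 3-coloring of `G` the root triangle `v 0, v 1, v 2` uses all three colors, and by induction
along the tripod ordering every later vertex of `A i`, having neighbors colored like the two other
roots, must get the color of `v i`. So each class is monochromatic and the coloring descends to the
contraction. Conversely, since the classes are stable, sending `A i` to the contracted vertex `i`
is a homomorphism from `G` onto the contraction, along which colorings pull back.
-/

open SimpleGraph

namespace IsTripod

variable {V : Type*} {G : SimpleGraph V} {A : Fin 3 → Set V} {k : ℕ} {v : Fin k → V}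

/-- The vertex `v i` of the root triangle lying in `A i`. -/
def root (hT : IsTripod G A k v) (i : Fin 3) : V :=
  v (Fin.castLE hT.1 i)

theorem root_mem (hT : IsTripod G A k v) (i : Fin 3) : hT.root i ∈ A i :=
  hT.2.2.2.2.2.1 i _

theorem isIndepSet (hT : IsTripod G A k v) (i : Fin 3) : G.IsIndepSet (A i) :=
  fun a ha b hb _ => hT.2.2.2.1 i a ha b hb

theorem mem_range_of_mem (hT : IsTripod G A k v) {w : V} {i : Fin 3} (hw : w ∈ A i) :
    w ∈ Set.range v :=
  hT.2.2.2.2.1 ▸ Set.mem_iUnion.mpr ⟨i, hw⟩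

theorem exists_earlier_adj (hT : IsTripod G A k v) {j : Fin k} (hj : 3 ≤ (j : ℕ)) {i i' : Fin 3}
    (hji : v j ∈ A i) (hi' : i' ≠ i) : ∃ j' < j, v j' ∈ A i' ∧ G.Adj (v j) (v j') :=
  hT.2.2.2.2.2.2.2 j hj i hji i' hi'

theorem root_adj (hT : IsTripod G A k v) {i j : Fin 3} (hij : i ≠ j) :
    G.Adj (hT.root i) (hT.root j) := by
  have hk := hT.1
  obtain ⟨h01, h02, h12⟩ := hT.2.2.2.2.2.2.1 (by omega) (by omega) (by omega)
  fin_cases i <;> fin_cases j <;> first | exact absurd rfl hij | assumption | symm; assumption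

theorem eq_of_mem_of_mem (hT : IsTripod G A k v) {x : V} {i j : Fin 3}
    (hi : x ∈ A i) (hj : x ∈ A j) : i = j := by
  by_contra hij
  exact Set.disjoint_left.mp (hT.2.2.1 i j hij) hi hj

theorem coloring_root_injective (hT : IsTripod G A k v) {α : Type*} (C : G.Coloring α) :
    Function.Injective fun i => C (hT.root i) := by
  intro i j hij
  by_contra hne
  exact C.valid (hT.root_adj hne) hij

theorem coloring_eq_root (hT : IsTripod G A k v) (C : G.Coloring (Fin 3)) {w : V} {i : Fin 3}
    (hw : w ∈ A i) : C w = C (hT.root i) := by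
  obtain ⟨j, rfl⟩ := hT.mem_range_of_mem hw
  induction j using WellFoundedLT.induction generalizing i with
  | _ j ih =>
  by_cases hj : (j : ℕ) < 3
  · have hroot : v j = hT.root ⟨j, hj⟩ := rfl
    rw [hroot, hT.eq_of_mem_of_mem hw (hroot ▸ hT.root_mem ⟨j, hj⟩)]
  · have hne : ∀ i', i' ≠ i → C (v j) ≠ C (hT.root i') := by
      intro i' hi'
      obtain ⟨j', hj'j, hj'A, hadj⟩ := hT.exists_earlier_adj (by omega) hw hi'
      exact ih j' hj'j hj'A ▸ C.valid hadj
    obtain ⟨i', hi'⟩ := Finite.surjective_of_injective (hT.coloring_root_injective C) (C (v j))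
    by_cases hii' : i' = i
    · exact hii' ▸ hi'.symm
    · exact absurd hi'.symm (hne i' hii')

end IsTripod

section Contraction

variable {V : Type*} {G : SimpleGraph V} {A : Fin 3 → Set V}

noncomputable def toContractTripod (hA : ∀ i, G.IsIndepSet (A i)) : G →g contractTripod G A where
  toFun x := by
    classical
    exact if h : ∃ i, x ∈ A i then Sum.inr h.choose
      else Sum.inl ⟨x, by simpa only [Set.mem_iUnion] using h⟩
  map_rel' := by
    classical
    intro x y hxy
    by_cases hx : ∃ i, x ∈ A i <;> by_cases hy : ∃ i, y ∈ A i <;>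
      simp only [dif_pos, dif_neg, hx, hy, not_false_eq_true]
    · intro hxy'
      exact hA _ hx.choose_spec (hxy' ▸ hy.choose_spec) (G.ne_of_adj hxy) hxy
    · exact ⟨x, hx.choose_spec, hxy⟩
    · exact ⟨y, hy.choose_spec, hxy⟩
    · exact hxy

def SimpleGraph.Coloring.contractTripod {α : Type*} (C : G.Coloring α) (c : Fin 3 → α)
    (hc : Function.Injective c) (hC : ∀ i, ∀ w ∈ A i, C w = c i) :
    (contractTripod G A).Coloring α :=
  Coloring.mk (Sum.elim (fun x => C x) c) <| by
    rintro (x | i) (y | j) hxy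
    · exact C.valid hxy
    · obtain ⟨w, hw, hxw⟩ := hxy
      change C x ≠ c j
      exact hC j w hw ▸ C.valid hxw
    · obtain ⟨w, hw, hwy⟩ := hxy
      change c i ≠ C y
      exact hC i w hw ▸ C.valid hwy
    · exact hc.ne hxy

end Contraction

/-- A graph `G` with a tripod is 3-colorable iff the graph obtained by
contracting the tripod is 3-colorable. -/
theorem contractTripod_colorable_iff {V : Type*} (G : SimpleGraph V)
    (A : Fin 3 → Set V) (k : ℕ) (v : Fin k → V) (hT : IsTripod G A k v) :
    G.Colorable 3 ↔ (contractTripod G A).Colorable 3 := by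
  constructor
  · rintro ⟨C⟩
    exact ⟨Coloring.contractTripod C _ (hT.coloring_root_injective C)
      fun i w hw => hT.coloring_eq_root C hw⟩
  · exact Colorable.of_hom (toContractTripod hT.isIndepSet)
end

section
/- Let (A_1, A_2, A_3) be a tripod in a graph G. Then for each i ∈ {1,2,3} and each 0 ≤ t ≤ k, the induced subgraph T_i(t) on the vertices of the other two classes A_j ∪ A_m that appear among the first t+3 vertices of the tripod ordering is connected. -/
/-- For a tripod `(A 0, A 1, A 2)` in `G` and each `i` and `0 ≤ t ≤ k`, the
induced subgraph `T_i(t)` on the vertices of the two classes other than `A i`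
among the first `t + 3` vertices of the tripod ordering is connected. -/
theorem tripod_Ti_connected {V : Type*} (G : SimpleGraph V)
    (A : Fin 3 → Set V) (k : ℕ) (v : Fin k → V) (hT : IsTripod G A k v)
    (i : Fin 3) (t : ℕ) (ht : t ≤ k) :
    (G.induce {x : V | (∃ j : Fin k, (j : ℕ) < t + 3 ∧ v j = x) ∧
      ∃ i' : Fin 3, i' ≠ i ∧ x ∈ A i'}).Connected := by
  obtain ⟨h3, hinj, hdisj, hstable, hcover, hroot, htri, hstep⟩ := hT
  obtain ⟨h01, h02, h12⟩ := htri (by omega) (by omega) (by omega)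
  set S : Set V := {x : V | (∃ j : Fin k, (j : ℕ) < t + 3 ∧ v j = x) ∧
      ∃ i' : Fin 3, i' ≠ i ∧ x ∈ A i'} with hS
  have hadj : ∀ a b : Fin 3, a ≠ b → ∀ (ha : (a : ℕ) < k) (hb : (b : ℕ) < k),
      G.Adj (v ⟨a, ha⟩) (v ⟨b, hb⟩) := by
    intro a b hab ha hb
    fin_cases a <;> fin_cases b <;> simp_all <;>
      first
        | exact h01 | exact h02 | exact h12
        | exact h01.symm | exact h02.symm | exact h12.symm
  obtain ⟨p, hpi⟩ : ∃ p : Fin 3, p ≠ i := by fin_cases i <;> decide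
  have hpk : (p : ℕ) < k := by omega
  have hbmem : v ⟨(p : ℕ), hpk⟩ ∈ S :=
    ⟨⟨⟨(p : ℕ), hpk⟩, by show (p : ℕ) < t + 3; omega, rfl⟩, p, hpi, hroot p hpk⟩
  have key : ∀ n : ℕ, ∀ j : Fin k, (j : ℕ) = n → ∀ hj : (j : ℕ) < t + 3,
      ∀ m : Fin 3, ∀ hm : m ≠ i, ∀ hA : v j ∈ A m,
      (G.induce S).Reachable ⟨v j, ⟨⟨j, hj, rfl⟩, m, hm, hA⟩⟩
        ⟨v ⟨(p : ℕ), hpk⟩, hbmem⟩ := by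
    intro n
    induction n using Nat.strong_induction_on with
    | _ n ih =>
      intro j hjn hj m hm hA
      by_cases hj3 : (j : ℕ) < 3
      · -- root case: v j is one of the three roots, in class ⟨j, _⟩
        have hAj : v j ∈ A ⟨(j : ℕ), hj3⟩ := by
          have h := hroot ⟨(j : ℕ), hj3⟩ (by omega)
          have : (⟨((⟨(j : ℕ), hj3⟩ : Fin 3) : ℕ), by omega⟩ : Fin k) = j :=
            Fin.ext rfl
          rwa [this] at h
        have hmj : m = ⟨(j : ℕ), hj3⟩ := by
          by_contra hne
          exact Set.disjoint_left.mp (hdisj m _ hne) hA hAj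
        have hval : (m : ℕ) = (j : ℕ) := by rw [hmj]
        by_cases hmp : m = p
        · have hvj : v j = v ⟨(p : ℕ), hpk⟩ := by
            congr 1
            exact Fin.ext (by rw [← hval, hmp])
          have heq : (⟨v j, ⟨⟨j, hj, rfl⟩, m, hm, hA⟩⟩ : ↥S)
              = ⟨v ⟨(p : ℕ), hpk⟩, hbmem⟩ := Subtype.ext hvj
          rw [heq]
        · have hvj : v j = v ⟨(m : ℕ), by omega⟩ := by
            congr 1
            exact Fin.ext hval.symm
          have hA' : G.Adj (v j) (v ⟨(p : ℕ), hpk⟩) := by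
            rw [hvj]; exact hadj m p hmp _ hpk
          exact (SimpleGraph.Adj.reachable (by simpa using hA'))
      · -- inductive case: use an earlier neighbor in the third class
        obtain ⟨r, hrm, hri⟩ : ∃ r : Fin 3, r ≠ m ∧ r ≠ i := by
          have : ∀ m' i' : Fin 3, m' ≠ i' → ∃ r : Fin 3, r ≠ m' ∧ r ≠ i' := by
            decide
          exact this m i hm
        obtain ⟨j', hj'lt, hj'A, hadjj⟩ := hstep j (by omega) m hA r hrm
        have hj' : (j' : ℕ) < t + 3 := by omega
        have step : (G.induce S).Adj ⟨v j, ⟨⟨j, hj, rfl⟩, m, hm, hA⟩⟩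
            ⟨v j', ⟨⟨j', hj', rfl⟩, r, hri, hj'A⟩⟩ := by simpa using hadjj
        exact step.reachable.trans (ih (j' : ℕ) (by omega) j' rfl hj' r hri hj'A)
  haveI : Nonempty ↥S := ⟨⟨v ⟨(p : ℕ), hpk⟩, hbmem⟩⟩
  refine ⟨fun x y => ?_⟩
  obtain ⟨x, ⟨jx, hjx, rfl⟩, mx, hmx, hAx⟩ := x
  obtain ⟨y, ⟨jy, hjy, rfl⟩, my, hmy, hAy⟩ := y
  exact (key (jx : ℕ) jx rfl hjx mx hmx hAx).trans
    (key (jy : ℕ) jy rfl hjy my hmy hAy).symm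
end

section
/- For each r ≥ 1, let G_r be the graph on vertices v_0, ..., v_{3r} (indices mod 3r+1) where v_i is adjacent to v_{i−1}, v_{i+1}, and v_{i+3j+2} for all j ∈ {0,...,r−1}. Then for each vertex v of G_r, the graph G_r − v has, up to permutation of colors, exactly one proper 3-coloring. -/
/-- Pokrovskiy's graph `G_r` on vertices `ZMod (3r+1)`: `x` and `y` are adjacent
iff they differ by `±1` or by `±(3j+2)` for some `0 ≤ j < r`. -/
def pok (r : ℕ) : SimpleGraph (ZMod (3 * r + 1)) where
  Adj x y := x ≠ y ∧ (y - x = 1 ∨ x - y = 1 ∨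
    (∃ j < r, y - x = ((3 * j + 2 : ℕ) : ZMod (3 * r + 1))) ∨
    (∃ j < r, x - y = ((3 * j + 2 : ℕ) : ZMod (3 * r + 1))))
  symm := by
    constructor
    rintro x y ⟨h1, h2⟩
    refine ⟨h1.symm, ?_⟩
    rcases h2 with h | h | h | h
    · exact Or.inr (Or.inl h)
    · exact Or.inl h
    · exact Or.inr (Or.inr (Or.inr h))
    · exact Or.inr (Or.inr (Or.inl h))
  loopless := ⟨fun x h => h.1 rfl⟩

/-! Listing the vertices of `G_r - v` as `v + 1, …, v + 3r`, any three consecutive ones form a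
triangle (differences `1` and `2`), so a proper 3-coloring is 3-periodic along the list and is
determined, up to renaming the colors, by the colors of `v + 1, v + 2, v + 3`. Conversely, coloring
`v + 1 + i` by `i mod 3` is proper: an edge joins list positions differing by `1`, by `3j + 2`, or,
wrapping around past `v`, by `3j + 2 - (3r + 1)`; none of these is a multiple of `3`. -/

theorem Fin.three_eq_of_two_triangles {a b c d : Fin 3} (hab : a ≠ b) (hac : a ≠ c)
    (hbc : b ≠ c) (hbd : b ≠ d) (hcd : c ≠ d) : a = d := by
  revert a b c d
  decide

def PathSquareProper {α : Type*} {m : ℕ} (g : Fin m → α) : Prop :=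
  ∀ i j : Fin m, i < j → (j : ℕ) ≤ i + 2 → g i ≠ g j

namespace PathSquareProper

variable {m : ℕ} {g : Fin m → Fin 3}

theorem eq_mod_three (hg : PathSquareProper g) (i : ℕ) (hi : i < m) :
    g ⟨i, hi⟩ = g ⟨i % 3, (Nat.mod_le _ _).trans_lt hi⟩ := by
  induction i using Nat.strong_induction_on with
  | _ i ih =>
    by_cases hi3 : i < 3
    · simp only [Nat.mod_eq_of_lt hi3]
    have hne : ∀ a b (hb : b < m) (hab : a < b), b ≤ a + 2 →
        g ⟨a, hab.trans hb⟩ ≠ g ⟨b, hb⟩ :=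
      fun a b hb hab hba => hg _ _ hab hba
    have h03 : g ⟨i - 3, by omega⟩ = g ⟨i, hi⟩ :=
      Fin.three_eq_of_two_triangles (hne _ (i - 2) (by omega) (by omega) (by omega))
        (hne _ (i - 1) (by omega) (by omega) (by omega)) (hne _ _ (by omega) (by omega) (by omega))
        (hne _ i hi (by omega) (by omega)) (hne _ _ hi (by omega) (by omega))
    rw [← h03, ih (i - 3) (by omega) (by omega)]
    congr 2
    omega

theorem injective_castLE (hg : PathSquareProper g) (hm : 3 ≤ m) :
    Function.Injective (g ∘ Fin.castLE hm) := by
  intro k l hkl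
  by_contra hne
  rcases lt_or_gt_of_ne hne with hlt | hlt
  · exact hg _ _ hlt (by simp only [Fin.val_castLE]; omega) hkl
  · exact hg _ _ hlt (by simp only [Fin.val_castLE]; omega) hkl.symm

theorem exists_perm (hm : 3 ≤ m) {g₁ g₂ : Fin m → Fin 3} (h₁ : PathSquareProper g₁)
    (h₂ : PathSquareProper g₂) : ∃ π : Equiv.Perm (Fin 3), ∀ i, g₂ i = π (g₁ i) := by
  let e₁ := Equiv.ofBijective _ (Finite.injective_iff_bijective.1 (h₁.injective_castLE hm))
  let e₂ := Equiv.ofBijective _ (Finite.injective_iff_bijective.1 (h₂.injective_castLE hm))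
  refine ⟨e₁.symm.trans e₂, fun i => ?_⟩
  have key : ∀ g : Fin m → Fin 3, PathSquareProper g →
      g i = (g ∘ Fin.castLE hm) ⟨i % 3, Nat.mod_lt _ (by norm_num)⟩ :=
    fun g hg => hg.eq_mod_three i i.2
  rw [key g₁ h₁, key g₂ h₂]
  exact (congrArg e₂ (e₁.symm_apply_apply _)).symm

end PathSquareProper

theorem ZMod.natCast_ne_zero_of_lt {n k : ℕ} (h0 : k ≠ 0) (hk : k < n) :
    (k : ZMod n) ≠ 0 :=
  (ZMod.val_ne_zero _).1 (by rwa [ZMod.val_natCast_of_lt hk])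

namespace pok

variable {r : ℕ}

theorem adj_add_left_iff (u x y : ZMod (3 * r + 1)) :
    (pok r).Adj (u + x) (u + y) ↔ (pok r).Adj x y := by
  simp only [pok, add_sub_add_left_eq_sub, ne_eq, add_right_inj]

theorem adj_add_natCast (hr : 1 ≤ r) (x : ZMod (3 * r + 1)) {d : ℕ} (hd₁ : 1 ≤ d)
    (hd₂ : d ≤ 2) : (pok r).Adj x (x + d) := by
  refine ⟨?_, ?_⟩
  · simpa using ZMod.natCast_ne_zero_of_lt (n := 3 * r + 1) (k := d) (by omega) (by omega)
  · rw [add_sub_cancel_left]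
    interval_cases d
    · exact Or.inl Nat.cast_one
    · exact Or.inr (Or.inr (Or.inl ⟨0, hr, rfl⟩))

theorem mod_three_ne_of_sub_eq {a b d : ℕ} (ha : a < 3 * r) (hb : b < 3 * r)
    (hd : d = 1 ∨ ∃ j < r, d = 3 * j + 2) (h : (b : ZMod (3 * r + 1)) - a = d) :
    a % 3 ≠ b % 3 := by
  have hd' : d < 3 * r := by omega
  have hmod : (a + d) % (3 * r + 1) = b % (3 * r + 1) := by
    rw [← ZMod.natCast_eq_natCast_iff', Nat.cast_add, ← h, add_sub_cancel]
  rw [Nat.add_mod_eq_ite, Nat.mod_eq_of_lt (by omega : a < 3 * r + 1),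
    Nat.mod_eq_of_lt (by omega : d < 3 * r + 1), Nat.mod_eq_of_lt (by omega : b < 3 * r + 1)]
    at hmod
  split_ifs at hmod <;> omega

theorem mod_three_ne_of_adj {a b : ℕ} (ha : a < 3 * r) (hb : b < 3 * r)
    (h : (pok r).Adj (a : ZMod (3 * r + 1)) b) : a % 3 ≠ b % 3 := by
  obtain ⟨-, h | h | ⟨j, hj, h⟩ | ⟨j, hj, h⟩⟩ := h
  · exact mod_three_ne_of_sub_eq ha hb (Or.inl rfl) (h.trans Nat.cast_one.symm)
  · exact (mod_three_ne_of_sub_eq hb ha (Or.inl rfl) (h.trans Nat.cast_one.symm)).symm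
  · exact mod_three_ne_of_sub_eq ha hb (Or.inr ⟨j, hj, rfl⟩) h
  · exact (mod_three_ne_of_sub_eq hb ha (Or.inr ⟨j, hj, rfl⟩) h).symm

theorem add_one_add_natCast_ne (v : ZMod (3 * r + 1)) {i : ℕ} (hi : i < 3 * r) :
    v + 1 + (i : ℕ) ≠ v := by
  rw [add_assoc, Ne, add_eq_left, add_comm (1 : ZMod (3 * r + 1)), ← Nat.cast_succ]
  exact ZMod.natCast_ne_zero_of_lt (Nat.succ_ne_zero i) (by omega)

theorem one_le_val_sub {v : ZMod (3 * r + 1)} (x : ({v}ᶜ : Set (ZMod (3 * r + 1)))) :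
    1 ≤ (x.1 - v).val :=
  ZMod.val_pos.2 (sub_ne_zero.2 (Set.mem_compl_singleton_iff.1 x.2))

variable (r) in
def vertexEquiv (v : ZMod (3 * r + 1)) : Fin (3 * r) ≃ ({v}ᶜ : Set (ZMod (3 * r + 1))) where
  toFun i := ⟨v + 1 + (i : ℕ), add_one_add_natCast_ne v i.is_lt⟩
  invFun x := ⟨(x.1 - v).val - 1, by
    have := one_le_val_sub x
    have := ZMod.val_lt (x.1 - v)
    omega⟩
  left_inv i := by
    ext
    dsimp only
    rw [add_assoc, add_sub_cancel_left, add_comm (1 : ZMod (3 * r + 1)), ← Nat.cast_succ,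
      ZMod.val_natCast_of_lt (by have := i.is_lt; omega)]
    rfl
  right_inv x := by
    ext
    dsimp only
    simp only [Nat.cast_sub (one_le_val_sub x), ZMod.natCast_zmod_val, Nat.cast_one]
    ring

theorem adj_vertexEquiv_iff (v : ZMod (3 * r + 1)) (i j : Fin (3 * r)) :
    ((pok r).induce {v}ᶜ).Adj (vertexEquiv r v i) (vertexEquiv r v j) ↔
      (pok r).Adj ((i : ℕ) : ZMod (3 * r + 1)) (j : ℕ) :=
  adj_add_left_iff _ _ _

theorem pathSquareProper_comp_vertexEquiv (hr : 1 ≤ r) {v : ZMod (3 * r + 1)}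
    (c : ((pok r).induce {v}ᶜ).Coloring (Fin 3)) : PathSquareProper (c ∘ vertexEquiv r v) := by
  intro i j hij hji
  refine c.valid ((adj_vertexEquiv_iff v i j).2 ?_)
  have hj : ((j : ℕ) : ZMod (3 * r + 1)) = (i : ℕ) + ((j - i : ℕ) : ℕ) := by
    rw [Nat.cast_sub hij.le, add_sub_cancel]
  rw [hj]
  exact adj_add_natCast hr _ (by omega) (by omega)

def coloringModThree (v : ZMod (3 * r + 1)) : ((pok r).induce {v}ᶜ).Coloring (Fin 3) :=
  SimpleGraph.Coloring.mk (fun x => ⟨(vertexEquiv r v).symm x % 3, Nat.mod_lt _ (by norm_num)⟩)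
    fun {x y} hxy hc => by
      rw [← (vertexEquiv r v).apply_symm_apply x, ← (vertexEquiv r v).apply_symm_apply y,
        adj_vertexEquiv_iff] at hxy
      exact mod_three_ne_of_adj (Fin.is_lt _) (Fin.is_lt _) hxy (Fin.val_eq_of_eq hc)

end pok

/-- For `r ≥ 1` and each vertex `v`, the graph `G_r - v` has, up to a
permutation of the colors, exactly one proper 3-coloring. -/
theorem pok_delete_vertex_unique_coloring (r : ℕ) (hr : 1 ≤ r)
    (v : ZMod (3 * r + 1)) :
    Nonempty (((pok r).induce ({v}ᶜ : Set (ZMod (3 * r + 1)))).Coloring (Fin 3)) ∧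
    ∀ c₁ c₂ : ((pok r).induce ({v}ᶜ : Set (ZMod (3 * r + 1)))).Coloring (Fin 3),
      ∃ π : Equiv.Perm (Fin 3), ∀ x, c₂ x = π (c₁ x) := by
  refine ⟨⟨pok.coloringModThree v⟩, fun c₁ c₂ => ?_⟩
  obtain ⟨π, hπ⟩ := PathSquareProper.exists_perm (by omega)
    (pok.pathSquareProper_comp_vertexEquiv hr c₁) (pok.pathSquareProper_comp_vertexEquiv hr c₂)
  refine ⟨π, fun x => ?_⟩
  simpa using hπ ((pok.vertexEquiv r v).symm x)
end
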